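/- arXiv:2209.03608 — 2 statements merged into one kernel-verified Lean document; each statement's English description precedes it below -/
import Mathlib

section
/- Let T = (V, E) be a finite tree with base vertex v₀, x ∈ ℂ^V, and for ε ∈ {±1}^E define x_v(ε) = (∏_{e ∈ P_v} ε_e)·x_v, where P_v is the unique path from v₀ to v. Let q = exp(π√-1/r) for a positive integer r. Then Σ_{ε ∈ {±1}^E} (∏_{e ∈ E} ε_e) · ∏_{e={u,v} ∈ E} q^{x_u(ε)·x_v(ε)} = ∏_{e={u,v} ∈ E} (q^{x_u x_v} - q^{-x_u x_v}). -/
open Complex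

/-- `q^z = exp(π √-1 z / r)`. -/
noncomputable def qpow (r : ℕ) (z : ℂ) : ℂ := Complex.exp (Real.pi * Complex.I * z / r)

/-- `{z} = q^z - q^{-z}`. -/
noncomputable def br (r : ℕ) (z : ℂ) : ℂ := qpow r z - qpow r (-z)

/-- The symmetric function `{u,v} ↦ g u * g v` on unordered pairs. -/
noncomputable def sym2mul {V : Type*} (g : V → ℂ) : Sym2 V → ℂ :=
  Sym2.lift ⟨fun a b => g a * g b, fun a b => mul_comm (g a) (g b)⟩

/-!
Write `σ_ε(e) = ±1` for the sign of the edge `e`. The tree paths to the two ends of an edge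
`e = {u, v}` differ exactly by `e`, and `σ_ε² = 1`, so the signs along the common part cancel:
`x_u(ε) x_v(ε) = σ_ε(e) x_u x_v`. Hence the summand factors over the edges as
`∏_e σ_ε(e) q^{σ_ε(e) x_u x_v}`, and summing over `ε ∈ {±1}^E` expands the product
`∏_e (q^{x_u x_v} - q^{-x_u x_v})`.
-/

open SimpleGraph

theorem List.prod_map_mul_prod_map_append_singleton {ι M : Type*} [CommMonoid M] {σ : ι → M}
    (hσ : ∀ i, σ i * σ i = 1) (l : List ι) (e : ι) :
    (l.map σ).prod * ((l ++ [e]).map σ).prod = σ e := by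
  have hsq : (l.map σ).prod * (l.map σ).prod = 1 := by
    rw [← List.prod_map_mul]
    simp [hσ]
  rw [List.map_append, List.prod_append, ← mul_assoc, hsq]
  simp

theorem SimpleGraph.IsAcyclic.edges_eq_append_or {V : Type*} [DecidableEq V]
    {G : SimpleGraph V} (hG : G.IsAcyclic) {v₀ u v : V} (h : G.Adj u v)
    {p : G.Walk v₀ u} (hp : p.IsPath) {q : G.Walk v₀ v} (hq : q.IsPath) :
    q.edges = p.edges ++ [s(u, v)] ∨ p.edges = q.edges ++ [s(u, v)] := by
  by_cases hv : v ∈ p.support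
  · right
    have htake : p.takeUntil v hv = q :=
      congrArg Subtype.val ((hG.subsingleton_path _ _).elim ⟨_, hp.takeUntil hv⟩ ⟨q, hq⟩)
    have hdrop : p.dropUntil v hv = Walk.cons h.symm Walk.nil :=
      congrArg Subtype.val
        ((hG.subsingleton_path _ _).elim ⟨_, hp.dropUntil hv⟩ (Path.singleton h.symm))
    conv_lhs => rw [← p.take_spec hv]
    simp [Walk.edges_append, htake, hdrop, Sym2.eq_swap]
  · left
    have hconcat : p.concat h = q :=
      congrArg Subtype.val ((hG.subsingleton_path _ _).elim ⟨_, hp.concat hv h⟩ ⟨q, hq⟩)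
    rw [← hconcat, Walk.edges_concat, List.concat_eq_append]

theorem SimpleGraph.IsTree.sym2mul_eq_of_path_prod {V : Type*} [DecidableEq V]
    {G : SimpleGraph V} (hG : G.IsTree) {σ : Sym2 V → ℂ} (hσ : ∀ e, σ e * σ e = 1)
    {v₀ : V} {x X : V → ℂ}
    (hX : ∀ v (p : G.Walk v₀ v), p.IsPath → X v = (p.edges.map σ).prod * x v)
    {e : Sym2 V} (he : e ∈ G.edgeSet) :
    sym2mul X e = σ e * sym2mul x e := by
  induction e using Sym2.ind with
  | h u v =>
    obtain ⟨p, hp, -⟩ := hG.existsUnique_path v₀ u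
    obtain ⟨q, hq, -⟩ := hG.existsUnique_path v₀ v
    simp only [sym2mul, Sym2.lift_mk, hX u p hp, hX v q hq]
    rcases hG.isAcyclic.edges_eq_append_or he hp hq with hqp | hpq
    · rw [hqp]
      linear_combination x u * x v * List.prod_map_mul_prod_map_append_singleton hσ p.edges s(u, v)
    · rw [hpq]
      linear_combination x u * x v * List.prod_map_mul_prod_map_append_singleton hσ q.edges s(u, v)

noncomputable def edgeSign {V : Type*} (G : SimpleGraph V) [DecidableRel G.Adj]
    (ε : G.edgeSet → Bool) (e : Sym2 V) : ℂ :=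
  if h : e ∈ G.edgeSet then (if ε ⟨e, h⟩ then 1 else -1) else 1

theorem edgeSign_mul_self {V : Type*} (G : SimpleGraph V) [DecidableRel G.Adj]
    (ε : G.edgeSet → Bool) (e : Sym2 V) :
    edgeSign G ε e * edgeSign G ε e = 1 := by
  unfold edgeSign
  split_ifs <;> norm_num

theorem Fintype.sum_bool_sign_mul_apply_sign_mul {R : Type*} [CommRing R] (f : R → R) (z : R) :
    ∑ b : Bool, (if b then 1 else -1) * f ((if b then 1 else -1) * z) = f z - f (-z) := by
  simp only [Fintype.sum_bool, ↓reduceIte, Bool.false_eq_true, one_mul, neg_one_mul]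
  ring

theorem stmt11_general (r : ℕ) {V : Type*} [Fintype V] [DecidableEq V]
    (G : SimpleGraph V) [DecidableRel G.Adj] (hT : G.IsTree) (v₀ : V) (x : V → ℂ)
    (X : (↥G.edgeSet → Bool) → V → ℂ)
    (hX : ∀ (ε : ↥G.edgeSet → Bool) (v : V) (p : G.Walk v₀ v), p.IsPath →
      X ε v =
        (p.edges.map (fun e =>
          if h : e ∈ G.edgeSet then (if ε ⟨e, h⟩ then (1 : ℂ) else -1) else 1)).prod * x v) :
    ∑ ε : ↥G.edgeSet → Bool,
        (∏ e : ↥G.edgeSet, (if ε e then (1 : ℂ) else -1)) *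
          ∏ e ∈ G.edgeFinset, qpow r (sym2mul (X ε) e) =
      ∏ e ∈ G.edgeFinset, (qpow r (sym2mul x e) - qpow r (-(sym2mul x e))) := by
  have hsign (ε : G.edgeSet → Bool) (e : G.edgeSet) :
      sym2mul (X ε) e = (if ε e then 1 else -1) * sym2mul x e := by
    simpa [edgeSign, e.2] using hT.sym2mul_eq_of_path_prod (edgeSign_mul_self G ε) (hX ε) e.2
  have hsubtype (F : Sym2 V → ℂ) : ∏ e ∈ G.edgeFinset, F e = ∏ e : G.edgeSet, F e :=
    Finset.prod_subtype G.edgeFinset (fun _ => mem_edgeFinset) F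
  calc _ = ∑ ε : G.edgeSet → Bool, ∏ e : G.edgeSet,
          (if ε e then 1 else -1) * qpow r ((if ε e then 1 else -1) * sym2mul x e) := by
        simp only [hsubtype, ← Finset.prod_mul_distrib, hsign]
    _ = ∏ e : G.edgeSet, ∑ b : Bool,
          (if b then 1 else -1) * qpow r ((if b then 1 else -1) * sym2mul x e) := by
        rw [Fintype.prod_sum]
    _ = _ := by
        simp only [hsubtype, Fintype.sum_bool_sign_mul_apply_sign_mul]

theorem stmt11 (r : ℕ) (hr : 0 < r) {V : Type*} [Fintype V] [DecidableEq V]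
    (G : SimpleGraph V) [DecidableRel G.Adj] (hT : G.IsTree) (v₀ : V) (x : V → ℂ)
    (X : (↥G.edgeSet → Bool) → V → ℂ)
    (hX : ∀ (ε : ↥G.edgeSet → Bool) (v : V) (p : G.Walk v₀ v), p.IsPath →
      X ε v =
        (p.edges.map (fun e =>
          if h : e ∈ G.edgeSet then (if ε ⟨e, h⟩ then (1 : ℂ) else -1) else 1)).prod * x v) :
    ∑ ε : ↥G.edgeSet → Bool,
        (∏ e : ↥G.edgeSet, (if ε e then (1 : ℂ) else -1)) *
          ∏ e ∈ G.edgeFinset, qpow r (sym2mul (X ε) e) =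
      ∏ e ∈ G.edgeFinset, (qpow r (sym2mul x e) - qpow r (-(sym2mul x e))) :=
  stmt11_general r G hT v₀ x X hX
end

section
/- Let r ≥ 2, q = exp(π√-1/r), x₁, x' integers not divisible by r, f' an integer, and let Γ be colored data with a distinguished vertex v₁. Then for any function G : ℂ → ℂ continuous at x₁, lim_{(α₁,α') → (x₁,x')} [ d(α₁)^{-1} · G(α₁) · ((-1)^{r-1} r q^{α₁ α'}) · q^{f'(α'² - (r-1)²)/2} / {rα₁} ] = q^{f'(x'² - (r-1)²)/2} · (q^{x₁ x'}/{x₁}) · G(x₁), where d(α) = (-1)^{r-1} r {α}/{rα}. -/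
open Complex

/-- The modified quantum dimension `d(α) = (-1)^(r-1) r {α}/{rα}`. -/
noncomputable def mdim (r : ℕ) (α : ℂ) : ℂ :=
  (-1 : ℂ) ^ (r - 1) * r * br r α / br r ((r : ℂ) * α)

lemma br_eq_zero_iff (r : ℕ) (hr : (r : ℂ) ≠ 0) (z : ℂ) :
    br r z = 0 ↔ ∃ n : ℤ, z = n * r := by
  have hπ : (Real.pi : ℂ) * Complex.I ≠ 0 := by
    simp [Real.pi_ne_zero, Complex.I_ne_zero]
  rw [br, sub_eq_zero, qpow, qpow, Complex.exp_eq_exp_iff_exists_int]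
  constructor
  · rintro ⟨n, hn⟩
    refine ⟨n, ?_⟩
    have h2 : (Real.pi : ℂ) * Complex.I * (2 * z) = Real.pi * Complex.I * (2 * (n * r)) := by
      field_simp at hn
      linear_combination ((Real.pi : ℂ) * Complex.I) * hn
    have h3 := mul_left_cancel₀ hπ h2
    linear_combination h3 / 2
  · rintro ⟨n, hn⟩
    exact ⟨n, by subst hn; field_simp; ring⟩

lemma continuousAt_qpow (r : ℕ) {f : ℂ × ℂ → ℂ} {p : ℂ × ℂ} (hf : ContinuousAt f p) :
    ContinuousAt (fun x => qpow r (f x)) p := by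
  unfold qpow
  exact Complex.continuous_exp.continuousAt.comp (by fun_prop)

open Filter Topology in
theorem stmt15 (r : ℕ) (hr : 2 ≤ r) (x₁ x' : ℤ) (hx₁ : ¬ (r : ℤ) ∣ x₁) (hx' : ¬ (r : ℤ) ∣ x')
    (f' : ℤ) (G : ℂ → ℂ) (hG : ContinuousAt G (x₁ : ℂ)) :
    Filter.Tendsto
      (fun p : ℂ × ℂ =>
        (mdim r p.1)⁻¹ * G p.1 * ((-1 : ℂ) ^ (r - 1) * r * qpow r (p.1 * p.2)) *
          qpow r ((f' : ℂ) * (p.2 ^ 2 - ((r : ℂ) - 1) ^ 2) / 2) / br r ((r : ℂ) * p.1))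
      (𝓝[{p : ℂ × ℂ | ¬∃ n : ℤ, p.1 = (n : ℂ)}] ((x₁ : ℂ), (x' : ℂ)))
      (𝓝 (qpow r ((f' : ℂ) * ((x' : ℂ) ^ 2 - ((r : ℂ) - 1) ^ 2) / 2) *
        (qpow r ((x₁ : ℂ) * (x' : ℂ)) / br r (x₁ : ℂ)) * G (x₁ : ℂ))) := by
  have hr0 : (r : ℂ) ≠ 0 := Nat.cast_ne_zero.mpr (by omega)
  have hx₁ne : br r (x₁ : ℂ) ≠ 0 := by
    rw [Ne, br_eq_zero_iff r hr0]
    rintro ⟨n, hn⟩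
    apply hx₁
    refine ⟨n, ?_⟩
    have : (x₁ : ℂ) = ((r * n : ℤ) : ℂ) := by push_cast; linear_combination hn
    exact_mod_cast this
  set F : ℂ × ℂ → ℂ := fun p =>
    G p.1 * qpow r (p.1 * p.2) * qpow r ((f' : ℂ) * (p.2 ^ 2 - ((r : ℂ) - 1) ^ 2) / 2)
      / br r p.1 with hF
  have heq : ∀ p ∈ {p : ℂ × ℂ | ¬∃ n : ℤ, p.1 = (n : ℂ)},
      (mdim r p.1)⁻¹ * G p.1 * ((-1 : ℂ) ^ (r - 1) * r * qpow r (p.1 * p.2)) *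
        qpow r ((f' : ℂ) * (p.2 ^ 2 - ((r : ℂ) - 1) ^ 2) / 2) / br r ((r : ℂ) * p.1) = F p := by
    intro p hp
    have h1 : br r p.1 ≠ 0 := by
      rw [Ne, br_eq_zero_iff r hr0]
      rintro ⟨n, hn⟩
      exact hp ⟨n * r, by push_cast; exact hn⟩
    have h2 : br r ((r : ℂ) * p.1) ≠ 0 := by
      rw [Ne, br_eq_zero_iff r hr0]
      rintro ⟨n, hn⟩
      exact hp ⟨n, mul_left_cancel₀ hr0 (by rw [hn]; ring)⟩
    have h3 : ((-1 : ℂ)) ^ (r - 1) ≠ 0 := by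
      exact pow_ne_zero _ (by norm_num)
    rw [hF, mdim]
    field_simp
  have hcont : ContinuousAt F ((x₁ : ℂ), (x' : ℂ)) := by
    rw [hF]
    apply ContinuousAt.div
    · have h1 : ContinuousAt (fun p : ℂ × ℂ => G p.1) ((x₁ : ℂ), (x' : ℂ)) :=
        ContinuousAt.comp (f := Prod.fst) (x := ((x₁ : ℂ), (x' : ℂ))) hG continuousAt_fst
      have h2 : ContinuousAt (fun p : ℂ × ℂ => (f' : ℂ) * (p.2 ^ 2 - ((r : ℂ) - 1) ^ 2) / 2)
          ((x₁ : ℂ), (x' : ℂ)) :=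
        ContinuousAt.div_const (by fun_prop) 2
      exact (h1.mul (continuousAt_qpow r (p := ((x₁ : ℂ), (x' : ℂ)))
          (f := fun p : ℂ × ℂ => p.1 * p.2) (by fun_prop))).mul
        (continuousAt_qpow r h2)
    · unfold br
      exact (continuousAt_qpow r (p := ((x₁ : ℂ), (x' : ℂ)))
          (f := fun p : ℂ × ℂ => p.1) (by fun_prop)).sub
        (continuousAt_qpow r (p := ((x₁ : ℂ), (x' : ℂ)))
          (f := fun p : ℂ × ℂ => -p.1) (by fun_prop))
    · exact hx₁ne
  have hval : qpow r ((f' : ℂ) * ((x' : ℂ) ^ 2 - ((r : ℂ) - 1) ^ 2) / 2) *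
      (qpow r ((x₁ : ℂ) * (x' : ℂ)) / br r (x₁ : ℂ)) * G (x₁ : ℂ)
      = F ((x₁ : ℂ), (x' : ℂ)) := by
    rw [hF]; field_simp
  rw [hval]
  exact Tendsto.congr' (eventually_nhdsWithin_of_forall fun p hp => (heq p hp).symm)
    (hcont.continuousWithinAt.tendsto)
end
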